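/- arXiv:2604.22578 — 2 statements merged into one kernel-verified Lean document; each statement's English description precedes it below -/
import Mathlib

section
/- Let B and X be 2-nilpotent groups and let φ : B →* MulAut X be a group homomorphism, inducing the action b ∗ x = φ(b)(x). Then the semidirect product X ⋊[φ] B (with multiplication (x, b)·(x', b') = (x·(b ∗ x'), b b')) is 2-nilpotent if and only if for all b, b' ∈ B and all x ∈ X one has (b ∗ x)·x⁻¹ ∈ Z(X) and b' ∗ ((b ∗ x)·x⁻¹) = (b ∗ x)·x⁻¹. -/
/-! Write `d b x = φ b x * x⁻¹`. Since `⁅inr b, inl x⁆ = inl (d b x)`, centrality of commutators in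
`X ⋊[φ] B` forces `d b x` to be central in `X` and fixed by `B`. Conversely, under that condition
`φ b x = d b x * x` shows that the automorphisms `φ b` pairwise commute, so `φ ⁅b, c⁆ = 1`, and
`⁅(x, b), (y, c)⁆ = inl (d b y * (d c x)⁻¹ * ⁅x, y⁆) * inr ⁅b, c⁆`. Both factors are central, as
`X` and `B` have class at most `2` and `φ` moves `x` and `y` only by central factors, hence fixes
`⁅x, y⁆`. -/

open scoped commutatorElement

open Subgroup

theorem commutator_le_center_iff {G : Type*} [Group G] :
    commutator G ≤ center G ↔ ∀ g h : G, ⁅g, h⁆ ∈ center G := by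
  simp [commutator_def, commutator_le]

theorem commutatorElement_mul_left_of_mem_center {G : Type*} [Group G] {z : G}
    (hz : z ∈ center G) (x y : G) : ⁅z * x, y⁆ = ⁅x, y⁆ := by
  have hzy : ⁅z, y⁆ = 1 := commutatorElement_eq_one_iff_commute.mpr (mem_center_iff.mp hz y).symm
  rw [commutatorElement_mul_left_eq_conj_mul, hzy, mul_one, ← mem_center_iff.mp hz,
    mul_inv_cancel_right]

theorem commutatorElement_mul_right_of_mem_center {G : Type*} [Group G] {z : G}
    (hz : z ∈ center G) (x y : G) : ⁅x, z * y⁆ = ⁅x, y⁆ := by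
  rw [← commutatorElement_inv, commutatorElement_mul_left_of_mem_center hz, commutatorElement_inv]

theorem mul_mul_mul_inv_mul_inv_of_mem_center {G : Type*} [Group G] {p q : G}
    (hp : p ∈ center G) (hq : q ∈ center G) (x y : G) :
    x * (p * y) * (q * x)⁻¹ * y⁻¹ = p * q⁻¹ * ⁅x, y⁆ := by
  have hp' : ∀ g, Commute g p := fun g => mem_center_iff.mp hp g
  have hq' : ∀ g, Commute g q⁻¹ := fun g => mem_center_iff.mp (inv_mem hq) g
  simp only [commutatorElement_def, mul_inv_rev, mul_assoc]
  rw [(hp' x).left_comm, (hq' x⁻¹).left_comm, (hq' y).left_comm, (hq' x).left_comm]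

namespace SemidirectProduct

variable {B X : Type*} [Group B] [Group X] (φ : B →* MulAut X)

theorem commutatorElement_mk (x y : X) (b c : B) :
    ⁅(⟨x, b⟩ : X ⋊[φ] B), (⟨y, c⟩ : X ⋊[φ] B)⁆
      = ⟨x * φ b y * φ (b * c * b⁻¹) x⁻¹ * φ ⁅b, c⁆ y⁻¹, ⁅b, c⁆⟩ := by
  ext <;> simp [commutatorElement_def, mul_assoc]

theorem commutatorElement_inr_inl (b : B) (x : X) :
    ⁅(inr b : X ⋊[φ] B), (inl x : X ⋊[φ] B)⁆ = inl (φ b x * x⁻¹) := by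
  ext <;> simp [commutatorElement_def]

theorem inl_mem_center_iff {x : X} :
    (inl x : X ⋊[φ] B) ∈ center (X ⋊[φ] B) ↔ x ∈ center X ∧ ∀ b, φ b x = x := by
  simp only [mem_center_iff, SemidirectProduct.ext_iff]
  constructor
  · intro h
    exact ⟨fun y => by simpa using h (inl y), fun b => by simpa using h (inr b)⟩
  · rintro ⟨hx, hfix⟩ g
    simp [hfix, hx]

theorem inr_mem_center_iff {b : B} :
    (inr b : X ⋊[φ] B) ∈ center (X ⋊[φ] B) ↔ b ∈ center B ∧ φ b = 1 := by
  simp only [mem_center_iff, SemidirectProduct.ext_iff]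
  constructor
  · intro h
    refine ⟨fun c => by simpa using h (inr c), MulEquiv.ext fun x => ?_⟩
    simpa using (h (inl x)).1.symm
  · rintro ⟨hb, hφ⟩ g
    simp [hφ, hb]

section CentralDisplacement

variable {φ} (hcen : ∀ b x, φ b x * x⁻¹ ∈ center X)
include hcen

theorem apply_commutatorElement_eq (b : B) (x y : X) : φ b ⁅x, y⁆ = ⁅x, y⁆ := by
  rw [map_commutatorElement, ← inv_mul_cancel_right (φ b x) x, ← inv_mul_cancel_right (φ b y) y,
    commutatorElement_mul_left_of_mem_center (hcen b x),
    commutatorElement_mul_right_of_mem_center (hcen b y)]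

variable (hfix : ∀ b b' x, φ b' (φ b x * x⁻¹) = φ b x * x⁻¹)
include hfix

theorem commute_apply (b c : B) : Commute (φ b) (φ c) := by
  have hcomp : ∀ b c u, φ b (φ c u) = (φ c u * u⁻¹) * ((φ b u * u⁻¹) * u) := by
    intro b c u
    calc φ b (φ c u) = φ b ((φ c u * u⁻¹) * u) := by rw [inv_mul_cancel_right]
      _ = _ := by rw [map_mul, hfix, inv_mul_cancel_right]
  refine MulEquiv.ext fun u => ?_
  simp only [MulAut.mul_apply, hcomp, ← mul_assoc, mem_center_iff.mp (hcen b u)]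

theorem map_commutatorElement_eq_one (b c : B) : φ ⁅b, c⁆ = 1 := by
  rw [map_commutatorElement, commutatorElement_eq_one_iff_commute]
  exact commute_apply hcen hfix b c

theorem map_conj_eq (b c : B) : φ (b * c * b⁻¹) = φ c := by
  rw [map_mul, map_mul, (commute_apply hcen hfix b c).eq, map_inv, mul_inv_cancel_right]

theorem commutatorElement_mk_eq_inl_mul_inr (x y : X) (b c : B) :
    ⁅(⟨x, b⟩ : X ⋊[φ] B), (⟨y, c⟩ : X ⋊[φ] B)⁆
      = inl ((φ b y * y⁻¹) * (φ c x * x⁻¹)⁻¹ * ⁅x, y⁆) * inr ⁅b, c⁆ := by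
  rw [commutatorElement_mk, map_conj_eq hcen hfix, map_commutatorElement_eq_one hcen hfix,
    mk_eq_inl_mul_inr, map_inv]
  congr 2
  have hby : φ b y = (φ b y * y⁻¹) * y := (inv_mul_cancel_right _ _).symm
  have hcx : φ c x = (φ c x * x⁻¹) * x := (inv_mul_cancel_right _ _).symm
  conv_lhs => rw [MulAut.one_apply, hby, hcx]
  exact mul_mul_mul_inv_mul_inv_of_mem_center (hcen b y) (hcen c x) x y

theorem commutatorElement_mem_center (hB : ∀ b c : B, ⁅b, c⁆ ∈ center B)
    (hX : ∀ x y : X, ⁅x, y⁆ ∈ center X) (g h : X ⋊[φ] B) : ⁅g, h⁆ ∈ center (X ⋊[φ] B) := by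
  obtain ⟨x, b⟩ := g
  obtain ⟨y, c⟩ := h
  rw [commutatorElement_mk_eq_inl_mul_inr hcen hfix]
  refine mul_mem ((inl_mem_center_iff φ).mpr ⟨?_, fun e => ?_⟩)
    ((inr_mem_center_iff φ).mpr ⟨hB b c, map_commutatorElement_eq_one hcen hfix b c⟩)
  · exact mul_mem (mul_mem (hcen b y) (inv_mem (hcen c x))) (hX x y)
  · rw [map_mul, map_mul, map_inv, hfix, hfix, apply_commutatorElement_eq hcen]

end CentralDisplacement

end SemidirectProduct

open SemidirectProduct

/-- For `2`-nilpotent groups `B`, `X` and `φ : B →* MulAut X` (write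
`b ∗ x := φ b x`), the semidirect product `X ⋊[φ] B` is `2`-nilpotent if and
only if for all `b b' : B`, `x : X` one has `(b ∗ x) * x⁻¹ ∈ Z(X)` and
`b' ∗ ((b ∗ x) * x⁻¹) = (b ∗ x) * x⁻¹`. -/
theorem semidirect_nil2_iff (B X : Type*) [Group B] [Group X]
    (hB : commutator B ≤ Subgroup.center B)
    (hX : commutator X ≤ Subgroup.center X)
    (φ : B →* MulAut X) :
    commutator (X ⋊[φ] B) ≤ Subgroup.center (X ⋊[φ] B) ↔
      ∀ (b b' : B) (x : X),
        φ b x * x⁻¹ ∈ Subgroup.center X ∧ φ b' (φ b x * x⁻¹) = φ b x * x⁻¹ := by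
  rw [commutator_le_center_iff] at hB hX ⊢
  constructor
  · intro h b b' x
    have hd := (inl_mem_center_iff φ).mp (commutatorElement_inr_inl φ b x ▸ h (inr b) (inl x))
    exact ⟨hd.1, hd.2 b'⟩
  · intro hC
    exact commutatorElement_mem_center (fun b x => (hC b b x).1) (fun b b' x => (hC b b' x).2)
      hB hX
end

section
/- Let B and X be groups and let φ : B →* MulAut X be a group homomorphism, with b ∗ x := φ(b)(x). Assume that for all b, b' ∈ B and all x ∈ X one has (b ∗ x)·x⁻¹ ∈ Z(X) and b' ∗ ((b ∗ x)·x⁻¹) = (b ∗ x)·x⁻¹. Then (b b') ∗ x = (b' b) ∗ x for all b, b' ∈ B and x ∈ X; equivalently, φ(b) ∘ φ(b') = φ(b') ∘ φ(b) for all b, b' ∈ B, so the image of φ is an abelian subgroup of MulAut X. -/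
/-- Let `φ : B →* MulAut X` be such that `(b ∗ x) * x⁻¹ ∈ Z(X)` and
`b' ∗ ((b ∗ x) * x⁻¹) = (b ∗ x) * x⁻¹` for all `b b' : B`, `x : X` (where
`b ∗ x := φ b x`). Then `(b * b') ∗ x = (b' * b) ∗ x` for all `b b' x`;
equivalently `φ b * φ b' = φ b' * φ b`, so the image of `φ` is abelian. -/
theorem image_abelian_of_central_fixed (B X : Type*) [Group B] [Group X]
    (φ : B →* MulAut X)
    (hc : ∀ (b : B) (x : X), φ b x * x⁻¹ ∈ Subgroup.center X)
    (hfix : ∀ (b b' : B) (x : X), φ b' (φ b x * x⁻¹) = φ b x * x⁻¹) :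
    (∀ (b b' : B) (x : X), φ (b * b') x = φ (b' * b) x) ∧
    (∀ b b' : B, φ b * φ b' = φ b' * φ b) ∧
    ∀ u v : φ.range, u * v = v * u := by
  have key : ∀ (b b' : B) (x : X), φ b (φ b' x) = φ b' (φ b x) := by
    intro b b' x
    have h1 : φ b (φ b' x) = (φ b' x * x⁻¹) * φ b x := by
      have : φ b' x = (φ b' x * x⁻¹) * x := by group
      rw [this, map_mul, hfix b' b x]
      simp [mul_assoc]
    have h2 : φ b' (φ b x) = (φ b x * x⁻¹) * φ b' x := by
      have : φ b x = (φ b x * x⁻¹) * x := by group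
      rw [this, map_mul, hfix b b' x]
      simp [mul_assoc]
    rw [h1, h2]
    have hcom := (Subgroup.mem_center_iff.mp (hc b x)) (φ b' x * x⁻¹)
    calc φ b' x * x⁻¹ * φ b x = φ b' x * x⁻¹ * (φ b x * x⁻¹) * x := by group
      _ = (φ b x * x⁻¹) * (φ b' x * x⁻¹) * x := by rw [hcom]
      _ = φ b x * x⁻¹ * φ b' x := by group
  have hmul : ∀ (b b' : B) (x : X), φ (b * b') x = φ (b' * b) x := by
    intro b b' x
    simp only [map_mul, MulAut.mul_apply]
    exact key b b' x
  refine ⟨hmul, fun b b' => ?_, fun u v => ?_⟩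
  · ext x
    simpa [MulAut.mul_apply] using key b b' x
  · obtain ⟨b, hb⟩ := u.2
    obtain ⟨b', hb'⟩ := v.2
    apply Subtype.ext
    push_cast
    rw [← hb, ← hb']
    ext x
    simpa [MulAut.mul_apply] using key b b' x
end
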